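/- arXiv:1704.06493 — 7 statements merged into one kernel-verified Lean document; each statement's English description precedes it below -/
import Mathlib

section
/- Let k ≥ 2 be an integer and β a real number such that the condition '−1 < β < 1 if k = 2, and −1/(2^{k−1} − 1) < β < 1/(2^{k−1} cos^{k−1}(π/(k−1)) + 1) if k ≥ 3' fails. Then there exists a finite connected hypergraph H all of whose hyperedges have size exactly k such that the multivariate Ising partition function Z_H^β(z₁, …, zₙ) = Σ_{S ⊆ V(H)} β^{|E(S, S̄)|} ∏_{i ∈ S} z_i does not have the Lee-Yang property. (A single hyperedge of size k suffices when k ≥ 3, and a single edge when k = 2.) -/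
open scoped Classical
open Finset

/-!
A single hyperedge already fails. On the edge `{0, …, k-1}` the partition function is
`(1 - β) (1 + ∏ zᵢ) + β ∏ (1 + zᵢ)`. Freezing all but two coordinates at a point `v` of the
unit circle leaves, up to a unimodular factor, a self-inversive bilinear form
`α t s + γ (t + s) + conj α` with `γ` real. If `‖α‖ < |γ|`, the Möbius map
`s ↦ -(γ s + conj α) / (α s + γ)` sends `|s| > 1` to `|t| > 1`; if `‖α‖ = |γ|`, the form
factors and vanishes identically in `t` at some `|s| = 1`. With `v = 1` the condition
`‖α‖ ≤ |γ|` says `β ≤ -1/(2^{k-1} - 1)` or `β ≥ 1`; with `v = e^{2πi/(k-1)}` it says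
`β ≥ 1/(2^{k-1} cos^{k-1}(π/(k-1)) + 1)` (for `β < 1`).
-/

open ComplexConjugate

def isingPartitionFunction {ι : Type*} [Fintype ι] [DecidableEq ι] (E : Finset (Finset ι))
    (β : ℂ) (z : ι → ℂ) : ℂ :=
  ∑ S : Finset ι,
    β ^ (E.filter fun e => (e ∩ S).Nonempty ∧ (e \ S).Nonempty).card * ∏ i ∈ S, z i

theorem isingPartitionFunction_singleton_univ {ι : Type*} [Fintype ι] [DecidableEq ι]
    [Nonempty ι] (β : ℂ) (z : ι → ℂ) :
    isingPartitionFunction {univ} β z = (1 - β) * (1 + ∏ i, z i) + β * ∏ i, (1 + z i) := by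
  have hcoef : ∀ S : Finset ι,
      β ^ (({univ} : Finset (Finset ι)).filter
          fun e => (e ∩ S).Nonempty ∧ (e \ S).Nonempty).card =
        β + (if S = ∅ then 1 - β else 0) + (if S = univ then 1 - β else 0) := by
    intro S
    rcases S.eq_empty_or_nonempty with rfl | hS
    · simp [univ_nonempty.ne_empty.symm]
    by_cases hU : S = univ
    · subst hU
      simp [filter_singleton, univ_nonempty.ne_empty]
    · simp [filter_singleton, hS, hS.ne_empty, hU, sdiff_nonempty, univ_subset_iff]
  have hexpand : ∑ S : Finset ι, ∏ i ∈ S, z i = ∏ i, (1 + z i) := by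
    rw [prod_one_add, powerset_univ]
  simp only [isingPartitionFunction, hcoef, add_mul, sum_add_distrib, ite_mul, zero_mul,
    sum_ite_eq', mem_univ, if_true, ← mul_sum, hexpand, prod_empty]
  ring

theorem exists_one_lt_mul_add_ne_zero (α γ : ℂ) (hγ : γ ≠ 0) :
    ∃ s : ℝ, 1 < s ∧ α * s + γ ≠ 0 := by
  by_cases h2 : α * 2 + γ = 0
  · refine ⟨3, by norm_num, fun h3 => hγ ?_⟩
    push_cast at h3
    linear_combination 3 * h2 - 2 * h3
  · exact ⟨2, by norm_num, by exact_mod_cast h2⟩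

theorem normSq_mul_add_conj_sub_normSq (α : ℂ) (γ s : ℝ) :
    Complex.normSq (γ * s + conj α) - Complex.normSq (α * s + γ) =
      (γ ^ 2 - Complex.normSq α) * (s ^ 2 - 1) := by
  simp only [Complex.normSq_apply, Complex.add_re, Complex.add_im, Complex.mul_re,
    Complex.mul_im, Complex.ofReal_re, Complex.ofReal_im, Complex.conj_re, Complex.conj_im]
  ring

theorem exists_bilinear_zero_of_norm_le (α : ℂ) (γ : ℝ) (h : ‖α‖ ≤ |γ|) :
    ∃ t s : ℂ, 1 < ‖t‖ ∧ 1 ≤ ‖s‖ ∧ α * t * s + γ * (t + s) + conj α = 0 := by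
  rcases eq_or_ne α 0 with rfl | hα
  · exact ⟨2, -2, by norm_num, by norm_num, by simp⟩
  have hγ : (γ : ℂ) ≠ 0 := by
    have := (norm_pos_iff.2 hα).trans_le h
    exact_mod_cast abs_pos.1 this
  rcases h.eq_or_lt with heq | hlt
  · -- the form factors as `(α t + γ) (α s + γ) / α` and vanishes at `s = -γ / α`
    refine ⟨2, -γ / α, by norm_num, ?_, ?_⟩
    · rw [norm_div, norm_neg, Complex.norm_real, Real.norm_eq_abs, ← heq,
        div_self (norm_ne_zero_iff.2 hα)]
    · have hnorm : α * conj α = γ ^ 2 := by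
        rw [Complex.mul_conj, Complex.normSq_eq_norm_sq, heq, sq_abs]; push_cast; ring
      field_simp
      linear_combination hnorm
  · obtain ⟨s, hs, hden⟩ := exists_one_lt_mul_add_ne_zero α γ hγ
    refine ⟨-(γ * s + conj α) / (α * s + γ), s, ?_, ?_, ?_⟩
    · have hsq : Complex.normSq (α * s + γ) < Complex.normSq (γ * s + conj α) := by
        have := normSq_mul_add_conj_sub_normSq α γ s
        have h1 : Complex.normSq α < γ ^ 2 := by
          rw [Complex.normSq_eq_norm_sq, ← sq_abs γ]
          exact pow_lt_pow_left₀ hlt (norm_nonneg _) two_ne_zero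
        linarith [mul_pos (sub_pos.2 h1) (show 0 < s ^ 2 - 1 by nlinarith)]
      rw [norm_div, norm_neg, one_lt_div (norm_pos_iff.2 hden)]
      simpa only [Complex.normSq_eq_norm_sq, sq_lt_sq₀ (norm_nonneg _) (norm_nonneg _)] using hsq
    · rw [Complex.norm_real, Real.norm_eq_abs, abs_of_pos (by linarith)]; exact hs.le
    · field_simp
      ring

theorem isingPartitionFunction_singleton_univ_cons_cons (m : ℕ) (β t s v : ℂ) :
    isingPartitionFunction {univ} β (Fin.cons t (Fin.cons s fun _ : Fin m => v)) =
      (1 - β) * (1 + t * s * v ^ m) + β * ((1 + t) * (1 + s) * (1 + v) ^ m) := by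
  rw [isingPartitionFunction_singleton_univ]
  simp only [Fin.prod_univ_succ, Fin.cons_zero, Fin.cons_succ, prod_const, card_univ,
    Fintype.card_fin]
  ring

theorem exists_edge_zero_at_one (m : ℕ) (β : ℝ)
    (hβ : 0 ≤ (β - 1) * (1 + β * (2 ^ (m + 1) - 1))) :
    ∃ t s v : ℂ, 1 < ‖t‖ ∧ 1 ≤ ‖s‖ ∧ 1 ≤ ‖v‖ ∧
      (1 - β) * (1 + t * s * v ^ m) + β * ((1 + t) * (1 + s) * (1 + v) ^ m) = 0 := by
  have hnorm : ‖((1 - β + β * 2 ^ m : ℝ) : ℂ)‖ ≤ |β * 2 ^ m| := by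
    rw [Complex.norm_real, Real.norm_eq_abs, ← sq_le_sq]
    rw [pow_succ] at hβ
    nlinarith
  obtain ⟨t, s, ht, hs, hzero⟩ := exists_bilinear_zero_of_norm_le _ _ hnorm
  refine ⟨t, s, 1, ht, hs, by simp, ?_⟩
  rw [Complex.conj_ofReal] at hzero
  push_cast at hzero
  linear_combination hzero

theorem exists_edge_zero_at_root_of_unity (m : ℕ) (β : ℝ) (hβ : β < 1)
    (hcos : 1 - β ≤ β * (2 * Real.cos (Real.pi / (m + 1))) ^ (m + 1)) :
    ∃ t s v : ℂ, 1 < ‖t‖ ∧ 1 ≤ ‖s‖ ∧ 1 ≤ ‖v‖ ∧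
      (1 - β) * (1 + t * s * v ^ m) + β * ((1 + t) * (1 + s) * (1 + v) ^ m) = 0 := by
  set φ := Real.pi / (m + 1)
  set c := Real.cos φ
  set y := Complex.exp (φ * Complex.I)
  have hy : ‖y‖ = 1 := Complex.norm_exp_ofReal_mul_I φ
  have hxy : conj y * y = 1 := by rw [Complex.conj_mul', hy]; simp
  have hsum : y + conj y = 2 * c := by
    rw [Complex.add_conj, Complex.exp_ofReal_mul_I_re, Complex.ofReal_mul, Complex.ofReal_ofNat]
  have hpow : y ^ (m + 1) = -1 := by
    rw [← Complex.exp_nat_mul, ← Complex.exp_pi_mul_I]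
    congr 1
    simp only [φ]
    push_cast
    field_simp
  have hym : y ^ m = -conj y := by linear_combination conj y * hpow - y ^ m * hxy
  -- since `y ^ (m + 1) = -1`, at `v = y ^ 2` the edge polynomial is `conj y` times the
  -- self-inversive form with this `α` and `γ = -q`
  set q : ℝ := β * (2 * c) ^ m
  set α : ℂ := (1 - β) * conj y - q
  have hnorm : ‖α‖ ≤ |-q| := by
    have hq : β * (2 * c) ^ (m + 1) = 2 * c * q := by simp only [q]; ring
    have hnormSq : Complex.normSq α = (1 - β) ^ 2 - 2 * c * q * (1 - β) + q ^ 2 := by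
      simp only [α, Complex.normSq_apply, Complex.sub_re, Complex.sub_im, Complex.mul_re,
        Complex.mul_im, Complex.ofReal_re, Complex.ofReal_im, Complex.conj_re, Complex.conj_im,
        Complex.exp_ofReal_mul_I_re, Complex.exp_ofReal_mul_I_im, Complex.one_re,
        Complex.one_im, y]
      linear_combination (1 - β) ^ 2 * Real.sin_sq_add_cos_sq φ
    rw [← abs_norm, ← sq_le_sq, ← Complex.normSq_eq_norm_sq, hnormSq]
    nlinarith [mul_nonneg (sub_nonneg.2 hβ.le) (sub_nonneg.2 hcos)]
  obtain ⟨t, s, ht, hs, hzero⟩ := exists_bilinear_zero_of_norm_le α (-q) hnorm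
  refine ⟨t, s, y ^ 2, ht, hs, by simp [hy], ?_⟩
  have h1 : (y ^ 2) ^ m = conj y ^ 2 := by rw [← pow_mul, mul_comm, pow_mul, hym]; ring
  have h2 : (1 + y ^ 2) ^ m = - conj y * (2 * c) ^ m := by
    rw [show 1 + y ^ 2 = y * (2 * c) by linear_combination hsum * y - hxy, mul_pow, hym]
  rw [h1, h2]
  simp only [α, map_sub, map_mul, map_one, Complex.conj_conj, Complex.conj_ofReal, q] at hzero
  push_cast at hzero
  linear_combination conj y * hzero + (β - 1) * hxy

theorem exists_hypergraph_of_edge_zero (m : ℕ) (β : ℝ) {t s v : ℂ} (ht : 1 < ‖t‖)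
    (hs : 1 ≤ ‖s‖) (hv : 1 ≤ ‖v‖)
    (hzero : (1 - β) * (1 + t * s * v ^ m) + β * ((1 + t) * (1 + s) * (1 + v) ^ m) = 0) :
    ∃ (n : ℕ) (E : Finset (Finset (Fin n))),
      (∀ e ∈ E, e.card = m + 2) ∧
      (∀ u v : Fin n,
        Relation.ReflTransGen (fun a b => ∃ e ∈ E, a ∈ e ∧ b ∈ e) u v) ∧
      ∃ z : Fin n → ℂ,
        (∀ i, 1 ≤ ‖z i‖) ∧ (∃ i, 1 < ‖z i‖) ∧
        (∑ S : Finset (Fin n),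
            (β : ℂ) ^ (E.filter (fun e => (e ∩ S).Nonempty ∧ (e \ S).Nonempty)).card *
              ∏ i ∈ S, z i) = 0 := by
  refine ⟨m + 2, {univ}, by simp, fun a b => .single ⟨univ, by simp⟩,
    Fin.cons t (Fin.cons s fun _ => v), fun i => ?_, ⟨0, ht⟩, ?_⟩
  · exact Fin.cases ht.le (Fin.cases hs fun _ => hv) i
  · exact (isingPartitionFunction_singleton_univ_cons_cons m β t s v).trans hzero

theorem nonneg_or_cos_of_not_leeYang_region (m : ℕ) (β : ℝ)
    (hfail : ¬ ((m + 2 = 2 → -1 < β ∧ β < 1) ∧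
      (3 ≤ m + 2 →
        -(1 / (2 ^ (m + 2 - 1) - 1)) < β ∧
        β < 1 / (2 ^ (m + 2 - 1) * Real.cos (Real.pi / ((m + 2 : ℕ) - 1)) ^ (m + 2 - 1)
          + 1)))) :
    0 ≤ (β - 1) * (1 + β * (2 ^ (m + 1) - 1)) ∨
      β < 1 ∧ 1 - β ≤ β * (2 * Real.cos (Real.pi / (m + 1))) ^ (m + 1) := by
  simp only [show m + 2 - 1 = m + 1 by omega,
    show ((m + 2 : ℕ) : ℝ) - 1 = m + 1 by push_cast; ring] at hfail
  have hd : (0 : ℝ) < 2 ^ (m + 1) - 1 := by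
    have : (2 : ℝ) ≤ 2 ^ (m + 1) := le_self_pow₀ one_le_two (by omega)
    linarith
  by_cases hlow : β ≤ -(1 / (2 ^ (m + 1) - 1))
  · have : β * (2 ^ (m + 1) - 1) ≤ -1 := by
      rw [le_neg, div_le_iff₀ hd] at hlow
      linarith
    exact .inl (mul_nonneg_of_nonpos_of_nonpos (by nlinarith) (by linarith))
  by_cases hhigh : 1 ≤ β
  · exact .inl (mul_nonneg (by linarith) (by nlinarith))
  rw [not_le] at hlow hhigh
  refine .inr ⟨hhigh, ?_⟩
  rcases Nat.eq_zero_or_pos m with rfl | hm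
  · norm_num at hlow
    exact absurd ⟨fun _ => ⟨hlow, hhigh⟩, fun h => by omega⟩ hfail
  have hcos : 0 ≤ Real.cos (Real.pi / (m + 1)) := by
    have hφ : 0 < Real.pi / (m + 1) := by positivity
    refine Real.cos_nonneg_of_mem_Icc ⟨by linarith [Real.pi_pos], ?_⟩
    apply div_le_div_of_nonneg_left Real.pi_pos.le two_pos
    have : (1 : ℝ) ≤ m := by exact_mod_cast hm
    linarith
  have hup : 1 / (2 ^ (m + 1) * Real.cos (Real.pi / (m + 1)) ^ (m + 1) + 1) ≤ β := by
    by_contra h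
    exact hfail ⟨fun h => by omega, fun _ => ⟨hlow, not_le.1 h⟩⟩
  rw [div_le_iff₀ (by positivity)] at hup
  rw [mul_pow]
  linarith

/-- **Optimality of the hypergraph Lee-Yang theorem (multivariate form).**
Let `k ≥ 2` and let `β` be a real number for which the condition
"`−1 < β < 1` if `k = 2`, and `−1/(2^{k−1} − 1) < β < 1/(2^{k−1} cos^{k−1}(π/(k−1)) + 1)`
if `k ≥ 3`" fails.  Then there is a finite connected hypergraph all of whose hyperedges
have size exactly `k` whose multivariate Ising partition function
`Z_H^β(z) = Σ_{S ⊆ V} β^{|E(S,S̄)|} ∏_{i∈S} z_i` does not have the Lee-Yang property,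
i.e. it vanishes at some point with all `|z_i| ≥ 1` and some `|z_i| > 1`. -/
theorem stmt3 (k : ℕ) (hk : 2 ≤ k) (β : ℝ)
    (hfail : ¬ ((k = 2 → -1 < β ∧ β < 1) ∧
      (3 ≤ k →
        -(1 / (2 ^ (k - 1) - 1)) < β ∧
        β < 1 / (2 ^ (k - 1) * Real.cos (Real.pi / (k - 1)) ^ (k - 1) + 1)))) :
    ∃ (n : ℕ) (E : Finset (Finset (Fin n))),
      (∀ e ∈ E, e.card = k) ∧
      (∀ u v : Fin n,
        Relation.ReflTransGen (fun a b => ∃ e ∈ E, a ∈ e ∧ b ∈ e) u v) ∧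
      ∃ z : Fin n → ℂ,
        (∀ i, 1 ≤ ‖z i‖) ∧ (∃ i, 1 < ‖z i‖) ∧
        (∑ S : Finset (Fin n),
            (β : ℂ) ^ (E.filter (fun e => (e ∩ S).Nonempty ∧ (e \ S).Nonempty)).card *
              ∏ i ∈ S, z i) = 0 := by
  obtain ⟨m, rfl⟩ : ∃ m, k = m + 2 := ⟨k - 2, by omega⟩
  obtain ⟨t, s, v, ht, hs, hv, hzero⟩ : ∃ t s v : ℂ, 1 < ‖t‖ ∧ 1 ≤ ‖s‖ ∧ 1 ≤ ‖v‖ ∧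
      (1 - β) * (1 + t * s * v ^ m) + β * ((1 + t) * (1 + s) * (1 + v) ^ m) = 0 := by
    rcases nonneg_or_cos_of_not_leeYang_region m β hfail with h | ⟨hβ, hcos⟩
    · exact exists_edge_zero_at_one m β h
    · exact exists_edge_zero_at_root_of_unity m β hβ hcos
  exact exists_hypergraph_of_edge_zero m β ht hs hv hzero
end

section
/- Let P(z₁, …, zₙ) be a multilinear polynomial with real coefficients, and for 1 ≤ j ≤ n write P = A_j z_j + B_j, where A_j and B_j are multilinear polynomials in the variables z_i, i ≠ j. If P has the Lee-Yang property, then for every j such that the variable z_j actually occurs in P (i.e., A_j is not the zero polynomial), one has A_j(z₁, …, z_{j−1}, z_{j+1}, …, zₙ) ≠ 0 whenever |z_i| ≥ 1 for all i ≠ j. In particular, A_j itself has the Lee-Yang property. -/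
/-!
Write `P = A z_j + B`, where `A` and `B` do not involve `z_j`. If `|w_i| > 1` for all `i` and
`A(w) ≠ 0`, then `|B(w)| ≤ |A(w)|`: otherwise `z_j = -B(w)/A(w)` would be a zero of `P` with
`|z_j| > 1`. A nonzero multilinear polynomial cannot vanish on a product of two-point sets, so
its nonvanishing set is dense, and the inequality extends by continuity to all `w` with
`|w_i| ≥ 1`. At a zero `w` of `A` this forces `B(w) = 0`, so `P` vanishes at `w` with `w_j`
replaced by `2`, contradicting the Lee-Yang property.
-/

open scoped Classical
open Finset

theorem exists_add_mul_ne_zero {R : Type*} [CommRing R] [NoZeroDivisors R] {g h a b : R}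
    (hab : a ≠ b) (hgh : g ≠ 0 ∨ h ≠ 0) : ∃ x, (x = a ∨ x = b) ∧ g + x * h ≠ 0 := by
  by_contra! hc
  have hh : h = 0 := by
    have : (a - b) * h = 0 := by linear_combination hc a (Or.inl rfl) - hc b (Or.inr rfl)
    exact (mul_eq_zero.1 this).resolve_left (sub_ne_zero.2 hab)
  have hg : g = 0 := by simpa [hh] using hc a (Or.inl rfl)
  exact hgh.elim (· hg) (· hh)

namespace Multilinear

variable {ι R : Type*}

theorem exists_sum_powerset_ne_zero [CommRing R] [NoZeroDivisors R] [DecidableEq ι]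
    {u S₀ : Finset ι} {c : Finset ι → R} (hS₀ : S₀ ⊆ u) (hc : c S₀ ≠ 0) {a b : ι → R}
    (hab : ∀ i, a i ≠ b i) :
    ∃ t : ι → R, (∀ i, t i = a i ∨ t i = b i) ∧ ∑ S ∈ u.powerset, c S * ∏ i ∈ S, t i ≠ 0 := by
  induction u using Finset.induction_on generalizing c S₀ with
  | empty =>
    obtain rfl := Finset.subset_empty.1 hS₀
    exact ⟨a, fun i => Or.inl rfl, by simpa using hc⟩
  | @insert k u hk ih =>
    obtain ⟨t, ht, hne⟩ : ∃ t : ι → R, (∀ i, t i = a i ∨ t i = b i) ∧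
        ((∑ S ∈ u.powerset, c S * ∏ i ∈ S, t i) ≠ 0 ∨
          (∑ S ∈ u.powerset, c (insert k S) * ∏ i ∈ S, t i) ≠ 0) := by
      by_cases hkS : k ∈ S₀
      · obtain ⟨t, ht, hne⟩ := ih (c := fun S => c (insert k S)) (S₀ := S₀.erase k)
          (Finset.subset_insert_iff.1 hS₀)
          (by rwa [Finset.insert_erase hkS])
        exact ⟨t, ht, Or.inr hne⟩
      · obtain ⟨t, ht, hne⟩ := ih ((Finset.subset_insert_iff_of_notMem hkS).1 hS₀) hc
        exact ⟨t, ht, Or.inl hne⟩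
    obtain ⟨x, hx, hx0⟩ := exists_add_mul_ne_zero (hab k) hne
    refine ⟨Function.update t k x, fun i => ?_, ?_⟩
    · rcases eq_or_ne i k with rfl | hik
      · simpa using hx
      · simpa [hik] using ht i
    · have hupd : ∀ S ∈ u.powerset, ∏ i ∈ S, Function.update t k x i = ∏ i ∈ S, t i :=
        fun S hS => Finset.prod_congr rfl fun i hi =>
          Function.update_of_ne (ne_of_mem_of_not_mem (Finset.mem_powerset.1 hS hi) hk) _ _
      rw [Finset.sum_powerset_insert hk]
      convert hx0 using 1
      rw [Finset.mul_sum]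
      refine congrArg₂ (· + ·) (Finset.sum_congr rfl fun S hS => by rw [hupd S hS])
        (Finset.sum_congr rfl fun S hS => ?_)
      rw [Finset.prod_insert fun hkS => hk (Finset.mem_powerset.1 hS hkS),
        Function.update_self, hupd S hS]
      ring

section Eval

variable [Fintype ι]

def eval [CommSemiring R] (c : Finset ι → R) (z : ι → R) : R :=
  ∑ S, c S * ∏ i ∈ S, z i

def evalAvoiding [DecidableEq ι] [CommSemiring R] (j : ι) (c : Finset ι → R) (z : ι → R) : R :=
  ∑ S ∈ (univ : Finset (Finset ι)).filter (fun S => j ∉ S), c S * ∏ i ∈ S, z i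

variable [DecidableEq ι]

theorem eval_eq_evalAvoiding_mul_add [CommSemiring R] (c : Finset ι → R) (j : ι) (z : ι → R) :
    eval c z = evalAvoiding j (fun S => c (insert j S)) z * z j + evalAvoiding j c z := by
  rw [eval, ← Finset.sum_filter_add_sum_filter_not univ (fun S => j ∉ S), add_comm,
    evalAvoiding, evalAvoiding, Finset.sum_mul]
  congr 1
  refine Finset.sum_bij' (fun S _ => S.erase j) (fun S _ => insert j S) ?_ ?_ ?_ ?_ ?_ <;>
    simp +contextual [Finset.insert_erase]
  intro S hjS
  rw [← Finset.mul_prod_erase S z hjS]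
  ring

theorem evalAvoiding_update_self [CommSemiring R] (j : ι) (c : Finset ι → R) (z : ι → R)
    (x : R) : evalAvoiding j c (Function.update z j x) = evalAvoiding j c z :=
  Finset.sum_congr rfl fun _ hS => congrArg _ <| Finset.prod_congr rfl fun _ hi =>
    Function.update_of_ne (ne_of_mem_of_not_mem hi (Finset.mem_filter.1 hS).2) _ _

theorem evalAvoiding_eq_eval [CommSemiring R] (j : ι) (c : Finset ι → R) :
    evalAvoiding j c = eval (fun S => if j ∈ S then 0 else c S) := by
  ext z
  simp only [evalAvoiding, eval, Finset.sum_filter, ite_mul, zero_mul, ite_not]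

theorem continuous_evalAvoiding [CommSemiring R] [TopologicalSpace R] [IsTopologicalSemiring R]
    (j : ι) (c : Finset ι → R) : Continuous (evalAvoiding j c) := by
  unfold evalAvoiding
  fun_prop

theorem exists_eval_ne_zero [CommRing R] [NoZeroDivisors R] {c : Finset ι → R} (hc : c ≠ 0)
    {a b : ι → R} (hab : ∀ i, a i ≠ b i) :
    ∃ t : ι → R, (∀ i, t i = a i ∨ t i = b i) ∧ eval c t ≠ 0 := by
  obtain ⟨S₀, hS₀⟩ := Function.ne_iff.1 hc
  simpa [eval, Finset.powerset_univ] using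
    exists_sum_powerset_ne_zero (Finset.subset_univ S₀) hS₀ hab

theorem dense_setOf_eval_ne_zero {𝕜 : Type*} [NontriviallyNormedField 𝕜] {c : Finset ι → 𝕜}
    (hc : c ≠ 0) : Dense {z | eval c z ≠ 0} := by
  refine Metric.dense_iff.2 fun a r hr => ?_
  obtain ⟨δ, hδ, hδr⟩ := NormedField.exists_norm_lt 𝕜 hr
  obtain ⟨t, ht, hne⟩ := exists_eval_ne_zero hc (a := a) (b := fun i => a i + δ)
    fun i => by simpa using norm_pos_iff.1 hδ
  refine ⟨t, ?_, hne⟩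
  rw [Metric.mem_ball, dist_pi_lt_iff hr]
  intro i
  rcases ht i with h | h <;> simp [h, dist_eq_norm, hr, hδr]

theorem dense_setOf_evalAvoiding_ne_zero {𝕜 : Type*} [NontriviallyNormedField 𝕜] {j : ι}
    {c : Finset ι → 𝕜} (hc : ∃ S, j ∉ S ∧ c S ≠ 0) : Dense {z | evalAvoiding j c z ≠ 0} := by
  obtain ⟨S, hjS, hS⟩ := hc
  rw [evalAvoiding_eq_eval]
  exact dense_setOf_eval_ne_zero (Function.ne_iff.2 ⟨S, by simpa [hjS] using hS⟩)

end Eval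

theorem mem_closure_setOf_one_lt_norm {E : Type*} [NormedAddCommGroup E] [NormedSpace ℝ E]
    {z : ι → E} (hz : ∀ i, 1 ≤ ‖z i‖) : z ∈ closure {w : ι → E | ∀ i, 1 < ‖w i‖} := by
  have hlim : Filter.Tendsto (fun t : ℝ => t • z) (nhdsWithin 1 (Set.Ioi 1)) (nhds z) := by
    simpa using (Filter.tendsto_id.mono_left (nhdsWithin_le_nhds (a := (1 : ℝ)))).smul_const z
  refine mem_closure_of_tendsto hlim ?_
  filter_upwards [self_mem_nhdsWithin] with t (ht : 1 < t) i
  rw [Pi.smul_apply, norm_smul, Real.norm_of_nonneg (by linarith)]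
  nlinarith [hz i]

def HasLeeYangProperty [Fintype ι] (c : Finset ι → ℂ) : Prop :=
  ∀ z : ι → ℂ, (∀ i, 1 ≤ ‖z i‖) → (∃ i, 1 < ‖z i‖) → eval c z ≠ 0

namespace HasLeeYangProperty

variable [Fintype ι] [DecidableEq ι] {c : Finset ι → ℂ}

theorem norm_evalAvoiding_le_of_one_lt (hc : HasLeeYangProperty c) (j : ι) {w : ι → ℂ}
    (hw : ∀ i, 1 < ‖w i‖) (hA : evalAvoiding j (fun S => c (insert j S)) w ≠ 0) :
    ‖evalAvoiding j c w‖ ≤ ‖evalAvoiding j (fun S => c (insert j S)) w‖ := by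
  set A := evalAvoiding j (fun S => c (insert j S)) w
  set B := evalAvoiding j c w
  by_contra! hlt
  have hroot : 1 < ‖-(B / A)‖ := by
    rw [norm_neg, norm_div]
    exact (one_lt_div (norm_pos_iff.2 hA)).2 hlt
  refine hc (Function.update w j (-(B / A))) (fun i => ?_) ⟨j, by simpa using hroot⟩ ?_
  · rcases eq_or_ne i j with rfl | hij
    · simpa using hroot.le
    · simpa [hij] using (hw i).le
  · rw [eval_eq_evalAvoiding_mul_add c j, evalAvoiding_update_self, evalAvoiding_update_self,
      Function.update_self]
    field_simp
    ring

theorem norm_evalAvoiding_le (hc : HasLeeYangProperty c) {j : ι}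
    (hj : ∃ S, j ∉ S ∧ c (insert j S) ≠ 0) {z : ι → ℂ} (hz : ∀ i, 1 ≤ ‖z i‖) :
    ‖evalAvoiding j c z‖ ≤ ‖evalAvoiding j (fun S => c (insert j S)) z‖ := by
  set U := {w : ι → ℂ | ∀ i, 1 < ‖w i‖}
  set G := {w | evalAvoiding j (fun S => c (insert j S)) w ≠ 0}
  have hU : IsOpen U := by
    simp only [U, Set.ofPred_forall]
    exact isOpen_iInter_of_finite fun i => isOpen_lt continuous_const (by fun_prop)
  have hz : z ∈ closure (U ∩ G) :=
    closure_minimal ((dense_setOf_evalAvoiding_ne_zero hj).open_subset_closure_inter hU)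
      isClosed_closure (mem_closure_setOf_one_lt_norm hz)
  exact (isClosed_le (continuous_evalAvoiding j c).norm (continuous_evalAvoiding j _).norm
    ).closure_subset_iff.2 (fun w hw => norm_evalAvoiding_le_of_one_lt hc j hw.1 hw.2) hz

end HasLeeYangProperty

end Multilinear

open Multilinear

/-- A multilinear polynomial with real coefficients is represented by its coefficient
family `p : Finset (Fin n) → ℝ`, so `P(z) = Σ_{S ⊆ [n]} p_S ∏_{i∈S} z_i`.  If `P` has
the Lee-Yang property then, for every `j` such that the variable `z_j` actually occurs
in `P` (i.e. the coefficient polynomial `A_j` of `z_j` is not identically zero), the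
polynomial `A_j(z) = Σ_{S ∌ j} p_{S∪{j}} ∏_{i∈S} z_i` is nonzero whenever `|z_i| ≥ 1`
for all `i ≠ j`; in particular `A_j` has the Lee-Yang property. -/
theorem stmt6 {n : ℕ} (p : Finset (Fin n) → ℝ)
    (hLY : ∀ z : Fin n → ℂ, (∀ i, 1 ≤ ‖z i‖) →
      (∃ i, 1 < ‖z i‖) →
      (∑ S : Finset (Fin n), (p S : ℂ) * ∏ i ∈ S, z i) ≠ 0)
    (j : Fin n)
    (hdeg : ∃ S : Finset (Fin n), j ∉ S ∧ p (insert j S) ≠ 0)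
    (z : Fin n → ℂ) (hz : ∀ i, i ≠ j → 1 ≤ ‖z i‖) :
    (∑ S ∈ (univ : Finset (Finset (Fin n))).filter (fun S => j ∉ S),
        (p (insert j S) : ℂ) * ∏ i ∈ S, z i) ≠ 0 := by
  let c : Finset (Fin n) → ℂ := fun S => p S
  have hc : HasLeeYangProperty c := hLY
  change evalAvoiding j (fun S => c (insert j S)) z ≠ 0
  intro hA
  set z' := Function.update z j 2
  have hz' : ∀ i, 1 ≤ ‖z' i‖ := fun i => by
    rcases eq_or_ne i j with rfl | hij
    · simp [z']
    · simpa [z', hij] using hz i hij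
  have hA' : evalAvoiding j (fun S => c (insert j S)) z' = 0 := by
    rw [evalAvoiding_update_self, hA]
  have hB' : evalAvoiding j c z' = 0 := by
    have hle := hc.norm_evalAvoiding_le (by simpa [c] using hdeg) hz'
    rwa [hA', norm_zero, norm_le_zero_iff] at hle
  refine hc z' hz' ⟨j, by simp [z']⟩ ?_
  rw [eval_eq_evalAvoiding_mul_add c j, hA', hB', zero_mul, zero_add]
end

section
/- Let P(z₁, …, zₙ) = Σ_{S ⊆ [n]} p_S ∏_{i ∈ S} z_i be a multilinear polynomial with all coefficients p_S real and nonzero, satisfying the symmetry p_S = p_{[n]∖S} for every S. For each j write P = A_j z_j + B_j with A_j, B_j multilinear in the variables z_i, i ≠ j, and suppose that for every j, A_j(z₁, …, z_{j−1}, z_{j+1}, …, zₙ) ≠ 0 whenever |z_i| ≥ 1 for all i ≠ j. Then P has the Lee-Yang property. -/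
open scoped Classical
open Finset

/-!
Write `P = A_j z_j + B_j`. The symmetry `p_S = p_{Sᶜ}` gives `B_j = (∏_{i ≠ j} z_i) · conj A_j`
on the torus `|z_i| = 1`, so `|B_j| = |A_j|` there. Releasing the coordinates from the circle one
at a time, the inequality `|B_j| ≤ |A_j|` spreads to the whole region `|z_i| ≥ 1`: in a single
variable `w` both sides are affine, `A_j = a w + b` with `|b| < |a|` because `A_j` has no zeros
there, so the maximum modulus principle applies to `(B_j / A_j)(1 / w)` on the closed unit disc.
Finally `|A_j z_j| > |A_j| ≥ |B_j|` as soon as `|z_j| > 1`.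
-/

open Filter Topology Function

theorem add_ne_zero_of_norm_lt {E : Type*} [SeminormedAddGroup E] {x y : E} (h : ‖y‖ < ‖x‖) :
    x + y ≠ 0 := fun h0 => by
  rw [eq_neg_of_add_eq_zero_left h0, norm_neg] at h
  exact lt_irrefl _ h

theorem Complex.norm_lt_of_forall_mul_add_ne_zero {a b : ℂ} (ha : a ≠ 0)
    (h : ∀ w : ℂ, 1 ≤ ‖w‖ → a * w + b ≠ 0) : ‖b‖ < ‖a‖ := by
  by_contra! hle
  refine h (-b / a) ?_ (by field_simp; ring)
  rwa [norm_div, norm_neg, one_le_div₀ (norm_pos_iff.2 ha)]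

theorem Complex.norm_mul_add_le_of_forall_norm_eq_one {a₁ a₀ b₁ b₀ : ℂ} (ha : ‖a₀‖ < ‖a₁‖)
    (hb : ∀ u : ℂ, ‖u‖ = 1 → ‖b₁ * u + b₀‖ ≤ ‖a₁ * u + a₀‖) {w : ℂ} (hw : 1 ≤ ‖w‖) :
    ‖b₁ * w + b₀‖ ≤ ‖a₁ * w + a₀‖ := by
  have hden : ∀ u : ℂ, ‖u‖ ≤ 1 → a₁ + a₀ * u ≠ 0 := fun u hu =>
    add_ne_zero_of_norm_lt <| by
      rw [norm_mul]; exact (mul_le_of_le_one_right (norm_nonneg _) hu).trans_lt ha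
  have hreflect : ∀ c d u : ℂ, u ≠ 0 → c + d * u = u * (c * u⁻¹ + d) := fun c d u hu => by
    field_simp
  set g : ℂ → ℂ := fun u => (b₁ + b₀ * u) / (a₁ + a₀ * u)
  have hg : ∀ u : ℂ, u ≠ 0 → ‖g u‖ = ‖b₁ * u⁻¹ + b₀‖ / ‖a₁ * u⁻¹ + a₀‖ := fun u hu => by
    simp only [g, hreflect _ _ u hu, norm_div, norm_mul]
    rw [mul_div_mul_left _ _ (norm_ne_zero_iff.2 hu)]
  have hdiff : DiffContOnCl ℂ g (Metric.ball 0 1) := by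
    refine DifferentiableOn.diffContOnCl (DifferentiableOn.div (by fun_prop) (by fun_prop) ?_)
    intro u hu
    rw [closure_ball 0 one_ne_zero, mem_closedBall_zero_iff] at hu
    exact hden u hu
  have hfrontier : ∀ u ∈ frontier (Metric.ball (0 : ℂ) 1), ‖g u‖ ≤ 1 := by
    intro u hu
    rw [frontier_ball 0 one_ne_zero, mem_sphere_zero_iff_norm] at hu
    rw [hg u (norm_ne_zero_iff.1 (hu ▸ one_ne_zero))]
    exact div_le_one_of_le₀ (hb _ (by rw [norm_inv, hu, inv_one])) (norm_nonneg _)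
  have hw0 : w ≠ 0 := norm_ne_zero_iff.1 (by positivity)
  have hwinv : ‖w⁻¹‖ ≤ 1 := by rw [norm_inv]; exact inv_le_one_of_one_le₀ hw
  have hmax : ‖g w⁻¹‖ ≤ 1 :=
    Complex.norm_le_of_forall_mem_frontier_norm_le Metric.isBounded_ball hdiff hfrontier
      (by rwa [closure_ball 0 one_ne_zero, mem_closedBall_zero_iff])
  have hpos : 0 < ‖a₁ * w + a₀‖ := by
    have := hden _ hwinv
    rw [hreflect _ _ _ (inv_ne_zero hw0), inv_inv] at this
    exact norm_pos_iff.2 (right_ne_zero_of_mul this)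
  rwa [hg _ (inv_ne_zero hw0), inv_inv, div_le_one₀ hpos] at hmax

section Multilinear

variable {ι : Type*}

noncomputable def multilinearEval (s : Finset ι) (q : Finset ι → ℝ) (z : ι → ℂ) : ℂ :=
  ∑ T ∈ s.powerset, (q T : ℂ) * ∏ l ∈ T, z l

variable {s : Finset ι} {q : Finset ι → ℝ} {i : ι}

theorem continuous_multilinearEval : Continuous (multilinearEval s q) := by
  unfold multilinearEval; fun_prop

theorem multilinearEval_congr {z z' : ι → ℂ} (h : ∀ l ∈ s, z l = z' l) :
    multilinearEval s q z = multilinearEval s q z' :=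
  sum_congr rfl fun T hT => by rw [prod_congr rfl fun l hl => h l (mem_powerset.1 hT hl)]

theorem eventually_multilinearEval_real_mul_ne_zero (hq : q s ≠ 0) {z : ι → ℂ}
    (hz : ∀ l ∈ s, z l ≠ 0) (x : ℝ) :
    ∀ᶠ t : ℝ in 𝓝[≠] x, multilinearEval s q (fun l => t * z l) ≠ 0 := by
  open Polynomial in
  set Φ : ℂ[X] := ∑ T ∈ s.powerset, C ((q T : ℂ) * ∏ l ∈ T, z l) * X ^ T.card
  have heval : ∀ t : ℂ, Φ.eval t = multilinearEval s q (fun l => t * z l) := fun t => by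
    simp only [Φ, multilinearEval, eval_finsetSum, eval_mul, eval_C, eval_pow, eval_X,
      prod_mul_distrib, prod_const]
    exact sum_congr rfl fun T _ => by ring
  have hcoeff : Φ.coeff s.card = (q s : ℂ) * ∏ l ∈ s, z l := by
    rw [finsetSum_coeff, sum_eq_single_of_mem s (mem_powerset_self s)]
    · rw [coeff_C_mul_X_pow, if_pos rfl]
    · intro T hT hne
      rw [coeff_C_mul_X_pow, if_neg]
      exact fun hcard => hne (eq_of_subset_of_card_le (mem_powerset.1 hT) hcard.le)
  have hΦ : Φ ≠ 0 := fun h0 => by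
    rw [h0, coeff_zero] at hcoeff
    exact mul_ne_zero (Complex.ofReal_ne_zero.2 hq) (prod_ne_zero_iff.2 hz) hcoeff.symm
  have hroots : {t : ℝ | Φ.eval (t : ℂ) = 0}.Finite :=
    (finite_setOfPred_isRoot hΦ).preimage Complex.ofReal_injective.injOn
  filter_upwards [nhdsNE_of_nhdsNE_sdiff_finite univ_mem hroots] with t ht
  rw [← heval]
  exact ht.2

variable [DecidableEq ι]

theorem multilinearEval_update_of_notMem (hi : i ∉ s) (z : ι → ℂ) (w : ℂ) :
    multilinearEval s q (update z i w) = multilinearEval s q z :=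
  multilinearEval_congr fun _ hl => update_of_ne (ne_of_mem_of_not_mem hl hi) _ _

theorem multilinearEval_insert (hi : i ∉ s) (z : ι → ℂ) :
    multilinearEval (insert i s) q z =
      multilinearEval s (fun T => q (insert i T)) z * z i + multilinearEval s q z := by
  rw [multilinearEval, sum_powerset_insert hi, add_comm, multilinearEval, multilinearEval,
    sum_mul]
  congr 1
  refine sum_congr rfl fun T hT => ?_
  rw [prod_insert (notMem_mono (mem_powerset.1 hT) hi)]
  ring

theorem multilinearEval_insert_update (hi : i ∉ s) (z : ι → ℂ) (w : ℂ) :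
    multilinearEval (insert i s) q (update z i w) =
      multilinearEval s (fun T => q (insert i T)) z * w + multilinearEval s q z := by
  rw [multilinearEval_insert hi, update_self, multilinearEval_update_of_notMem hi,
    multilinearEval_update_of_notMem hi]

theorem multilinearEval_eq_prod_mul_conj {q₁ q₂ : Finset ι → ℝ}
    (hq : ∀ T ⊆ s, q₁ T = q₂ (s \ T)) {z : ι → ℂ} (hz : ∀ l ∈ s, ‖z l‖ = 1) :
    multilinearEval s q₁ z = (∏ l ∈ s, z l) * starRingEnd ℂ (multilinearEval s q₂ z) := by
  have hnorm : ∀ t ⊆ s, (∏ l ∈ t, z l) * ∏ l ∈ t, starRingEnd ℂ (z l) = 1 := fun t ht => by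
    rw [← prod_mul_distrib]
    refine prod_eq_one fun l hl => ?_
    rw [Complex.mul_conj, Complex.normSq_eq_norm_sq, hz l (ht hl)]
    norm_num
  rw [multilinearEval, multilinearEval, map_sum, mul_sum]
  refine sum_nbij' (s \ ·) (s \ ·) (by simp) (by simp) (fun T hT => ?_) (fun T hT => ?_)
    (fun T hT => ?_)
  · exact Finset.sdiff_sdiff_eq_self (mem_powerset.1 hT)
  · exact Finset.sdiff_sdiff_eq_self (mem_powerset.1 hT)
  have hT := mem_powerset.1 hT
  rw [map_mul, Complex.conj_ofReal, map_prod, hq T hT, ← prod_sdiff hT]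
  linear_combination (-(q₂ (s \ T) : ℂ) * ∏ l ∈ T, z l) * hnorm _ sdiff_subset

theorem norm_multilinearEval_eq_of_forall_norm_eq_one {q₁ q₂ : Finset ι → ℝ}
    (hq : ∀ T ⊆ s, q₁ T = q₂ (s \ T)) {z : ι → ℂ} (hz : ∀ l ∈ s, ‖z l‖ = 1) :
    ‖multilinearEval s q₁ z‖ = ‖multilinearEval s q₂ z‖ := by
  rw [multilinearEval_eq_prod_mul_conj hq hz, norm_mul, Complex.norm_conj, norm_prod,
    prod_eq_one hz, one_mul]

theorem one_le_norm_update {z : ι → ℂ} (hz : ∀ l ∈ s, 1 ≤ ‖z l‖) {w : ℂ} (hw : 1 ≤ ‖w‖) :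
    ∀ l ∈ insert i s, 1 ≤ ‖update z i w l‖ := by
  intro l hl
  rcases eq_or_ne l i with rfl | hli
  · rwa [update_self]
  · rw [update_of_ne hli]
    exact hz l ((mem_insert.1 hl).resolve_left hli)

theorem norm_multilinearEval_lt_of_insert (hi : i ∉ s) (htop : q (insert i s) ≠ 0)
    (hne : ∀ z : ι → ℂ, (∀ l ∈ insert i s, 1 ≤ ‖z l‖) → multilinearEval (insert i s) q z ≠ 0)
    {z : ι → ℂ} (hz : ∀ l ∈ s, 1 ≤ ‖z l‖) :
    ‖multilinearEval s q z‖ < ‖multilinearEval s (fun T => q (insert i T)) z‖ := by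
  set a := multilinearEval s (fun T => q (insert i T))
  set b := multilinearEval s q
  have hlt : ∀ ζ : ι → ℂ, (∀ l ∈ s, 1 ≤ ‖ζ l‖) → a ζ ≠ 0 → ‖b ζ‖ < ‖a ζ‖ := fun ζ hζ ha =>
    Complex.norm_lt_of_forall_mul_add_ne_zero ha fun w hw => by
      rw [← multilinearEval_insert_update hi]
      exact hne _ (one_le_norm_update hζ hw)
  -- Along the ray `t • z` the coefficient `a` is a polynomial in `t` with nonzero leading
  -- coefficient `q (insert i s) * ∏ z`, so it vanishes for only finitely many `t > 1`.
  have hle : ‖b z‖ ≤ ‖a z‖ := by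
    set ζ : ℝ → ι → ℂ := fun t l => t * z l
    have hζ : Continuous ζ := by fun_prop
    have hζ1 : ζ 1 = z := by simp [ζ]
    have hlim : ∀ f : (ι → ℂ) → ℂ, Continuous f →
        Tendsto (fun t => f (ζ t)) (𝓝[>] 1) (𝓝 (f z)) := fun f hf =>
      hζ1 ▸ ((hf.comp hζ).tendsto 1).mono_left nhdsWithin_le_nhds
    refine le_of_tendsto_of_tendsto (hlim _ continuous_multilinearEval).norm
      (hlim _ continuous_multilinearEval).norm ?_
    have hz0 : ∀ l ∈ s, z l ≠ 0 := fun l hl => norm_pos_iff.1 (one_pos.trans_le (hz l hl))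
    filter_upwards [self_mem_nhdsWithin, nhdsWithin_mono _ (fun t ht => ne_of_gt ht)
      (eventually_multilinearEval_real_mul_ne_zero (s := s) (q := fun T => q (insert i T))
        htop hz0 1)] with t (ht : 1 < t) ha
    refine (hlt (ζ t) (fun l hl => ?_) ha).le
    rw [norm_mul, Complex.norm_real, Real.norm_of_nonneg (by linarith)]
    exact one_le_mul_of_one_le_of_one_le ht.le (hz l hl)
  rcases eq_or_ne (a z) 0 with ha | ha
  · have hb : b z = 0 := norm_le_zero_iff.1 (by rwa [ha, norm_zero] at hle)
    refine absurd ?_ (hne _ (one_le_norm_update hz (w := 1) (by simp)))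
    rw [multilinearEval_insert_update hi]
    change a z * 1 + b z = 0
    rw [ha, hb, zero_mul, zero_add]
  · exact hlt z hz ha

section Comparison

variable {q₁ q₂ : Finset ι → ℝ}

theorem norm_multilinearEval_le_of_forall_norm_update_eq_one (his : i ∈ s) (htop : q₂ s ≠ 0)
    (hne : ∀ z : ι → ℂ, (∀ l ∈ s, 1 ≤ ‖z l‖) → multilinearEval s q₂ z ≠ 0)
    {z : ι → ℂ} (hz : ∀ l ∈ s, 1 ≤ ‖z l‖)
    (hcircle : ∀ u : ℂ, ‖u‖ = 1 →
      ‖multilinearEval s q₁ (update z i u)‖ ≤ ‖multilinearEval s q₂ (update z i u)‖) :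
    ‖multilinearEval s q₁ z‖ ≤ ‖multilinearEval s q₂ z‖ := by
  obtain ⟨s, hi, rfl⟩ : ∃ s', i ∉ s' ∧ s = insert i s' :=
    ⟨s.erase i, notMem_erase i s, (insert_erase his).symm⟩
  simp only [multilinearEval_insert_update hi] at hcircle
  rw [multilinearEval_insert hi, multilinearEval_insert hi]
  exact Complex.norm_mul_add_le_of_forall_norm_eq_one
    (norm_multilinearEval_lt_of_insert hi htop hne fun l hl => hz l (mem_insert_of_mem hl))
    hcircle (hz i (mem_insert_self i s))

theorem norm_multilinearEval_le_of_sdiff_symm (hsym : ∀ T ⊆ s, q₁ T = q₂ (s \ T))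
    (htop : q₂ s ≠ 0) (hne : ∀ z : ι → ℂ, (∀ l ∈ s, 1 ≤ ‖z l‖) → multilinearEval s q₂ z ≠ 0)
    {z : ι → ℂ} (hz : ∀ l ∈ s, 1 ≤ ‖z l‖) :
    ‖multilinearEval s q₁ z‖ ≤ ‖multilinearEval s q₂ z‖ := by
  suffices h : ∀ t ⊆ s, ∀ z : ι → ℂ, (∀ l ∈ s \ t, ‖z l‖ = 1) → (∀ l ∈ t, 1 ≤ ‖z l‖) →
      ‖multilinearEval s q₁ z‖ ≤ ‖multilinearEval s q₂ z‖ from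
    h s subset_rfl z (by simp) hz
  intro t ht
  induction t using Finset.induction_on with
  | empty =>
    exact fun z hz1 _ =>
      (norm_multilinearEval_eq_of_forall_norm_eq_one hsym (by simpa using hz1)).le
  | insert i t hit ih =>
    intro z hz1 hz
    have hts : t ⊆ s := (subset_insert i t).trans ht
    refine norm_multilinearEval_le_of_forall_norm_update_eq_one (ht (mem_insert_self i t)) htop
      hne (fun l hl => ?_) fun u hu => ih hts _ (fun l hl => ?_) (fun l hl => ?_)
    · by_cases hlt : l ∈ insert i t
      · exact hz l hlt
      · exact (hz1 l (mem_sdiff.2 ⟨hl, hlt⟩)).ge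
    · rcases eq_or_ne l i with rfl | hli
      · rwa [update_self]
      · rw [update_of_ne hli]
        exact hz1 l (by simp_all)
    · rw [update_of_ne (ne_of_mem_of_not_mem hl hit)]
      exact hz l (mem_insert_of_mem hl)

end Comparison

end Multilinear

theorem Finset.filter_notMem_univ_eq_powerset_erase {ι : Type*} [Fintype ι] [DecidableEq ι]
    (j : ι) : (univ : Finset (Finset ι)).filter (fun S => j ∉ S) = (univ.erase j).powerset := by
  ext S
  simp [subset_erase]

theorem Finset.compl_eq_insert_erase_sdiff {ι : Type*} [Fintype ι] [DecidableEq ι] {j : ι}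
    {T : Finset ι} (hT : T ⊆ univ.erase j) : Tᶜ = insert j (univ.erase j \ T) := by
  rw [compl_eq_univ_sdiff, ← insert_sdiff_of_notMem _ fun hj => by simpa using hT hj,
    insert_erase (mem_univ j)]

/-- Let `P(z) = Σ_{S ⊆ [n]} p_S ∏_{i∈S} z_i` be a multilinear polynomial with all
coefficients real and nonzero, satisfying the symmetry `p_S = p_{[n]∖S}`.  If for every
`j` the coefficient polynomial `A_j(z) = Σ_{S ∌ j} p_{S∪{j}} ∏_{i∈S} z_i` of `z_j` is
nonzero whenever `|z_i| ≥ 1` for all `i ≠ j`, then `P` has the Lee-Yang property. -/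
theorem stmt8 {n : ℕ} (p : Finset (Fin n) → ℝ)
    (hne : ∀ S, p S ≠ 0)
    (hsym : ∀ S : Finset (Fin n), p S = p Sᶜ)
    (hA : ∀ j : Fin n, ∀ z : Fin n → ℂ, (∀ i, i ≠ j → 1 ≤ ‖z i‖) →
      (∑ S ∈ (univ : Finset (Finset (Fin n))).filter (fun S => j ∉ S),
          (p (insert j S) : ℂ) * ∏ i ∈ S, z i) ≠ 0)
    (z : Fin n → ℂ) (hz : ∀ i, 1 ≤ ‖z i‖)
    (hz' : ∃ i, 1 < ‖z i‖) :
    (∑ S : Finset (Fin n), (p S : ℂ) * ∏ i ∈ S, z i) ≠ 0 := by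
  obtain ⟨k, hk⟩ := hz'
  have hAk : ∀ ζ : Fin n → ℂ, (∀ l ∈ univ.erase k, 1 ≤ ‖ζ l‖) →
      multilinearEval (univ.erase k) (fun T => p (insert k T)) ζ ≠ 0 := fun ζ hζ => by
    simpa only [multilinearEval, filter_notMem_univ_eq_powerset_erase] using
      hA k ζ fun l hl => hζ l (mem_erase.2 ⟨hl, mem_univ l⟩)
  have hB : ‖multilinearEval (univ.erase k) p z‖ ≤
      ‖multilinearEval (univ.erase k) (fun T => p (insert k T)) z‖ :=
    norm_multilinearEval_le_of_sdiff_symm (q₂ := fun T => p (insert k T))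
      (fun T hT => (hsym T).trans (congrArg p (compl_eq_insert_erase_sdiff hT)))
      (by rw [insert_erase (mem_univ k)]; exact hne univ) hAk fun l _ => hz l
  have hsplit := multilinearEval_insert (q := p) (notMem_erase k univ) z
  rw [insert_erase (mem_univ k), multilinearEval, powerset_univ] at hsplit
  rw [hsplit]
  refine add_ne_zero_of_norm_lt (hB.trans_lt ?_)
  rw [norm_mul]
  exact lt_mul_of_one_lt_right (norm_pos_iff.2 (hAk z fun l _ => hz l)) hk
end

section
/- Let p_S, for S ⊆ [n], be real numbers satisfying p_S = p_{[n]∖S} for every S. Let z₂, …, zₙ be complex numbers with |z_i| = 1 for all 2 ≤ i ≤ n, and set A₁ = Σ_{S ⊆ {2,…,n}} p_{S ∪ {1}} ∏_{i ∈ S} z_i and B₁ = Σ_{S ⊆ {2,…,n}} p_S ∏_{i ∈ S} z_i. If A₁ ≠ 0, then the unique root ζ₁ = −B₁/A₁ of the equation A₁ z₁ + B₁ = 0 satisfies |ζ₁| = 1. -/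
/-!
Conjugation inverts every `z i` on the unit circle, so `conj B₁ · ∏_{i ≠ 1} z_i` is the sum
`B₁` with each coefficient `p_S` replaced by `p_{{2,…,n} ∖ S}`. By the symmetry
`p_S = p_{[n] ∖ S}` that coefficient is `p_{S ∪ {1}}`, i.e. the sum is `A₁`;
hence `|B₁| = |A₁|`.
-/

open Finset ComplexConjugate

variable {ι 𝕜 : Type*} [DecidableEq ι] [RCLike 𝕜]

lemma conj_prod_mul_prod_eq_prod_sdiff {U S : Finset ι} (hSU : S ⊆ U) {z : ι → 𝕜}
    (hz : ∀ i ∈ U, ‖z i‖ = 1) :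
    conj (∏ i ∈ S, z i) * ∏ i ∈ U, z i = ∏ i ∈ U \ S, z i := by
  have hS : conj (∏ i ∈ S, z i) * ∏ i ∈ S, z i = 1 := by
    rw [RCLike.conj_mul, norm_prod, prod_eq_one fun i hi => hz i (hSU hi)]
    simp
  rw [← prod_sdiff hSU, mul_left_comm, hS, mul_one]

lemma conj_sum_powerset_mul_prod_eq (U : Finset ι) (q : Finset ι → ℝ) {z : ι → 𝕜}
    (hz : ∀ i ∈ U, ‖z i‖ = 1) :
    conj (∑ S ∈ U.powerset, (q S : 𝕜) * ∏ i ∈ S, z i) * ∏ i ∈ U, z i =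
      ∑ S ∈ U.powerset, (q (U \ S) : 𝕜) * ∏ i ∈ S, z i := by
  calc conj (∑ S ∈ U.powerset, (q S : 𝕜) * ∏ i ∈ S, z i) * ∏ i ∈ U, z i
      = ∑ S ∈ U.powerset, (q S : 𝕜) * ∏ i ∈ U \ S, z i := by
        rw [map_sum, sum_mul]
        refine sum_congr rfl fun S hS => ?_
        rw [map_mul, RCLike.conj_ofReal, mul_assoc,
          conj_prod_mul_prod_eq_prod_sdiff (mem_powerset.1 hS) hz]
    _ = ∑ S ∈ U.powerset, (q (U \ S) : 𝕜) * ∏ i ∈ S, z i := by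
        refine sum_nbij' (U \ ·) (U \ ·) (fun _ _ => mem_powerset.2 sdiff_subset)
          (fun _ _ => mem_powerset.2 sdiff_subset)
          (fun _ hS => Finset.sdiff_sdiff_eq_self (mem_powerset.1 hS))
          (fun _ hS => Finset.sdiff_sdiff_eq_self (mem_powerset.1 hS))
          fun _ hS => by rw [Finset.sdiff_sdiff_eq_self (mem_powerset.1 hS)]

lemma norm_sum_powerset_mul_prod_eq_sdiff (U : Finset ι) (q : Finset ι → ℝ) {z : ι → 𝕜}
    (hz : ∀ i ∈ U, ‖z i‖ = 1) :
    ‖∑ S ∈ U.powerset, (q S : 𝕜) * ∏ i ∈ S, z i‖ =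
      ‖∑ S ∈ U.powerset, (q (U \ S) : 𝕜) * ∏ i ∈ S, z i‖ := by
  rw [← conj_sum_powerset_mul_prod_eq U q hz, norm_mul, RCLike.norm_conj, norm_prod,
    prod_eq_one hz, mul_one]

/-- Let `p_S` (for `S ⊆ [n]`, here `[n] = Fin (n+1)` with distinguished first index `0`
playing the role of `1`) be real numbers with `p_S = p_{[n]∖S}`.  Let `z` satisfy
`|z_i| = 1` for all `i ≠ 0`, and set `A₁ = Σ_{S ∌ 0} p_{S∪{0}} ∏_{i∈S} z_i` and
`B₁ = Σ_{S ∌ 0} p_S ∏_{i∈S} z_i`.  If `A₁ ≠ 0` then the unique root `ζ₁ = −B₁/A₁` of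
`A₁ z₁ + B₁ = 0` satisfies `|ζ₁| = 1`. -/
theorem stmt9 {n : ℕ} (p : Finset (Fin (n + 1)) → ℝ)
    (hsym : ∀ S : Finset (Fin (n + 1)), p S = p Sᶜ)
    (z : Fin (n + 1) → ℂ) (hz : ∀ i, i ≠ 0 → ‖z i‖ = 1)
    (hA : (∑ S ∈ (univ : Finset (Finset (Fin (n + 1)))).filter (fun S => 0 ∉ S),
        (p (insert 0 S) : ℂ) * ∏ i ∈ S, z i) ≠ 0) :
    ‖(-(∑ S ∈ (univ : Finset (Finset (Fin (n + 1)))).filter (fun S => 0 ∉ S),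
            (p S : ℂ) * ∏ i ∈ S, z i) /
        (∑ S ∈ (univ : Finset (Finset (Fin (n + 1)))).filter (fun S => 0 ∉ S),
            (p (insert 0 S) : ℂ) * ∏ i ∈ S, z i))‖ = 1 := by
  have hfilter : (univ : Finset (Finset (Fin (n + 1)))).filter (fun S => 0 ∉ S) =
      ({0}ᶜ : Finset (Fin (n + 1))).powerset := by
    ext S
    simp
  have hcoeff : ∀ S ∈ ({0}ᶜ : Finset (Fin (n + 1))).powerset,
      (p (insert 0 S) : ℂ) * ∏ i ∈ S, z i = (p ({0}ᶜ \ S) : ℂ) * ∏ i ∈ S, z i := by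
    intro S _
    rw [hsym, insert_eq, compl_union, ← sdiff_eq_inter_compl]
  rw [hfilter, sum_congr rfl hcoeff] at hA ⊢
  have hnorm := norm_sum_powerset_mul_prod_eq_sdiff ({0}ᶜ) p
    fun i hi => hz i (by simpa using hi)
  rw [norm_div, norm_neg]
  exact (div_eq_one_iff_eq (norm_ne_zero_iff.2 hA)).2 hnorm
end

section
/- Let m be an integer and k a positive integer with 2|m| ≤ k. For all real numbers θ₁, …, θ_k with −π/2 ≤ θᵢ ≤ π/2 for each i and Σ_{i=1}^k θᵢ = mπ, one has ∏_{i=1}^k cos θᵢ ≤ cos^k(mπ/k); moreover, equality is attained when θᵢ = mπ/k for all i. -/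
open scoped Classical
open Finset

/-- Let `m` be an integer and `k` a positive integer with `2|m| ≤ k`.  For all reals
`θ₁,…,θ_k` with `−π/2 ≤ θᵢ ≤ π/2` summing to `mπ`, one has
`∏ cos θᵢ ≤ cos^k(mπ/k)`; moreover equality is attained at `θᵢ = mπ/k` for all `i`
(which satisfies the constraints). -/
theorem stmt10 (m : ℤ) (k : ℕ) (hk : 0 < k) (hmk : 2 * m.natAbs ≤ k) :
    (∀ θ : Fin k → ℝ,
      (∀ i, -(Real.pi / 2) ≤ θ i ∧ θ i ≤ Real.pi / 2) →
      (∑ i, θ i) = (m : ℝ) * Real.pi →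
      (∏ i, Real.cos (θ i)) ≤ Real.cos ((m : ℝ) * Real.pi / k) ^ k) ∧
    (-(Real.pi / 2) ≤ (m : ℝ) * Real.pi / k ∧ (m : ℝ) * Real.pi / k ≤ Real.pi / 2) ∧
    (∑ _i : Fin k, ((m : ℝ) * Real.pi / k)) = (m : ℝ) * Real.pi ∧
    (∏ _i : Fin k, Real.cos ((m : ℝ) * Real.pi / k)) =
      Real.cos ((m : ℝ) * Real.pi / k) ^ k := by
  have hkR : (0 : ℝ) < k := by exact_mod_cast hk
  have hπ := Real.pi_pos
  -- bounds on mπ/k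
  have habs : |(m : ℝ)| * (Real.pi / k) ≤ Real.pi / 2 := by
    rw [← mul_div_assoc, div_le_div_iff₀ hkR two_pos]
    have h1 : (2 : ℝ) * |(m : ℝ)| ≤ k := by
      have h' : (2 * (m.natAbs : ℤ)) ≤ (k : ℤ) := by exact_mod_cast hmk
      rw [← Int.cast_abs]
      have habs' : (|m| : ℤ) = (m.natAbs : ℤ) := Int.abs_eq_natAbs m
      exact_mod_cast habs' ▸ h'
    nlinarith
  have hq : (0 : ℝ) ≤ Real.pi / k := by positivity
  have hub : (m : ℝ) * Real.pi / k ≤ Real.pi / 2 := by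
    rw [mul_div_assoc]
    calc (m : ℝ) * (Real.pi / k) ≤ |(m : ℝ)| * (Real.pi / k) :=
          mul_le_mul_of_nonneg_right (le_abs_self _) hq
      _ ≤ Real.pi / 2 := habs
  have hlb : -(Real.pi / 2) ≤ (m : ℝ) * Real.pi / k := by
    rw [mul_div_assoc]
    have h2 := mul_le_mul_of_nonneg_right (neg_le_abs (m : ℝ)) hq
    nlinarith
  have hmem : (m : ℝ) * Real.pi / k ∈ Set.Icc (-(Real.pi / 2)) (Real.pi / 2) :=
    ⟨hlb, hub⟩
  have hc0 : 0 ≤ Real.cos ((m : ℝ) * Real.pi / k) :=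
    Real.cos_nonneg_of_mem_Icc hmem
  have hconc : ConcaveOn ℝ (Set.Icc (-(Real.pi / 2)) (Real.pi / 2)) Real.cos :=
    strictConcaveOn_cos_Icc.concaveOn
  refine ⟨?_, ⟨hlb, hub⟩, ?_, ?_⟩
  · intro θ hθ hsum
    have hcosnn : ∀ i, 0 ≤ Real.cos (θ i) := fun i =>
      Real.cos_nonneg_of_mem_Icc ⟨(hθ i).1, (hθ i).2⟩
    set c := Real.cos ((m : ℝ) * Real.pi / k)
    -- Jensen: mean of cosines ≤ c
    have hw0 : ∀ i ∈ (univ : Finset (Fin k)), (0 : ℝ) ≤ (1 : ℝ) / k := fun _ _ => by positivity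
    have hw1 : ∑ _i : Fin k, (1 : ℝ) / k = 1 := by
      rw [Finset.sum_const, card_univ, Fintype.card_fin, nsmul_eq_mul]
      field_simp
    have hjensen : (∑ i, (1 : ℝ) / k * Real.cos (θ i)) ≤ c := by
      have := hconc.le_map_sum (t := univ) (w := fun _ => (1 : ℝ) / k) (p := θ)
        hw0 hw1 (fun i _ => ⟨(hθ i).1, (hθ i).2⟩)
      have hmean : (∑ i, (k : ℝ)⁻¹ * θ i) = (m : ℝ) * Real.pi / k := by
        rw [← Finset.mul_sum, hsum]
        ring
      simpa [smul_eq_mul, one_div, hmean] using this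
    -- AM-GM
    have hAM : (∏ i, Real.cos (θ i) ^ ((1 : ℝ) / k)) ≤ ∑ i, (1 : ℝ) / k * Real.cos (θ i) :=
      Real.geom_mean_le_arith_mean_weighted univ (fun _ => (1 : ℝ) / k)
        (fun i => Real.cos (θ i)) hw0 hw1 (fun i _ => hcosnn i)
    have hprodnn : 0 ≤ ∏ i, Real.cos (θ i) ^ ((1 : ℝ) / k) :=
      Finset.prod_nonneg fun i _ => Real.rpow_nonneg (hcosnn i) _
    have hmeannn : 0 ≤ ∑ i, (1 : ℝ) / k * Real.cos (θ i) :=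
      Finset.sum_nonneg fun i _ => mul_nonneg (by positivity) (hcosnn i)
    calc (∏ i, Real.cos (θ i))
        = (∏ i, Real.cos (θ i) ^ ((1 : ℝ) / k)) ^ k := by
          rw [← Finset.prod_pow]
          refine Finset.prod_congr rfl fun i _ => ?_
          rw [← Real.rpow_natCast (Real.cos (θ i) ^ ((1 : ℝ) / k)) k,
            ← Real.rpow_mul (hcosnn i)]
          rw [one_div, inv_mul_cancel₀ (by positivity : (k : ℝ) ≠ 0), Real.rpow_one]
      _ ≤ (∑ i, (1 : ℝ) / k * Real.cos (θ i)) ^ k := pow_le_pow_left₀ hprodnn hAM k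
      _ ≤ c ^ k := pow_le_pow_left₀ hmeannn hjensen k
  · rw [Finset.sum_const, card_univ, Fintype.card_fin, nsmul_eq_mul]
    field_simp
  · simp [Finset.prod_const, card_univ]
end

section
/- Let k ≥ 3 be an integer and let D = {y ∈ ℂ : |y − 1| ≤ 1} be the closed disk of radius 1 centered at 1. Then the set of real numbers expressible as a product of k − 1 elements of D, namely ℝ ∩ {∏_{i=1}^{k−1} y_i : y_1, …, y_{k−1} ∈ D}, is exactly the closed interval [−2^{k−1} cos^{k−1}(π/(k−1)), 2^{k−1}]. -/
open scoped Classical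
open Finset

/-! A point of the disk `‖y - 1‖ ≤ 1` is `y = r e^{iθ}` with `|θ| < π/2` and `r ≤ 2 cos θ`.
If a product of `n` such points is a negative real `x`, the arguments add up to an odd multiple
of `π`, so `|∑ θᵢ| ≥ π`; AM-GM and the concavity of `cos` on `[-π/2, π/2]` then give
`|x| ≤ ∏ 2 cos θᵢ ≤ (2 cos (∑ θᵢ / n))ⁿ ≤ (2 cos (π / n))ⁿ`. Every value of the interval is the
product of `n` equal factors `r` or `r e^{iπ/n}`. -/

open Real

theorem Complex.norm_sub_one_le_one_iff (y : ℂ) : ‖y - 1‖ ≤ 1 ↔ ‖y‖ ^ 2 ≤ 2 * y.re := by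
  have h : ‖y - 1‖ ^ 2 = ‖y‖ ^ 2 - 2 * y.re + 1 := by
    simp only [Complex.sq_norm, Complex.normSq_apply, Complex.sub_re, Complex.sub_im,
      Complex.one_re, Complex.one_im]
    ring
  rw [← sq_le_one_iff₀ (norm_nonneg _), h]
  constructor <;> intro <;> linarith

theorem Complex.norm_le_two_mul_cos_arg {y : ℂ} (hy : ‖y - 1‖ ≤ 1) :
    ‖y‖ ≤ 2 * Real.cos (arg y) := by
  rcases eq_or_ne y 0 with rfl | hy0
  · simp
  have hpos : 0 < ‖y‖ := norm_pos_iff.mpr hy0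
  have hre : ‖y‖ * Real.cos (arg y) = y.re := norm_mul_cos_arg y
  have := (norm_sub_one_le_one_iff y).mp hy
  nlinarith

theorem Complex.abs_arg_lt_pi_div_two_of_norm_sub_one_le_one {y : ℂ} (hy : ‖y - 1‖ ≤ 1) :
    |arg y| < π / 2 := by
  refine abs_arg_lt_pi_div_two_iff.mpr ((eq_or_ne y 0).symm.imp (fun hy0 => ?_) id)
  have := (norm_sub_one_le_one_iff y).mp hy
  have : 0 < ‖y‖ := norm_pos_iff.mpr hy0
  nlinarith

theorem Complex.norm_ofReal_mul_exp_sub_one_le_one {r θ : ℝ} (hr : 0 ≤ r)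
    (h : r ≤ 2 * Real.cos θ) : ‖(r : ℂ) * exp (θ * I) - 1‖ ≤ 1 := by
  rw [norm_sub_one_le_one_iff, norm_mul, norm_exp_ofReal_mul_I, Complex.norm_real,
    Real.norm_of_nonneg hr, re_ofReal_mul, exp_ofReal_mul_I_re]
  nlinarith

theorem Complex.prod_eq_prod_norm_mul_exp_sum_arg {ι : Type*} (s : Finset ι) (y : ι → ℂ) :
    ∏ i ∈ s, y i = ((∏ i ∈ s, ‖y i‖ : ℝ) : ℂ) * exp ((∑ i ∈ s, arg (y i) : ℝ) * I) := by
  push_cast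
  rw [Finset.sum_mul, exp_sum, ← prod_mul_distrib]
  exact prod_congr rfl fun i _ => (norm_mul_exp_arg_mul_I (y i)).symm

theorem Real.pi_le_abs_of_cos_eq_neg_one {x : ℝ} (h : cos x = -1) : π ≤ |x| := by
  obtain ⟨m, rfl⟩ := cos_eq_neg_one_iff.mp h
  have hm : (1 : ℝ) ≤ |1 + 2 * (m : ℝ)| := by exact_mod_cast Int.one_le_abs (by omega)
  calc π = π * 1 := (mul_one π).symm
    _ ≤ π * |1 + 2 * (m : ℝ)| := by gcongr
    _ = |π + m * (2 * π)| := by rw [← abs_of_pos pi_pos, ← abs_mul, abs_of_pos pi_pos]; ring_nf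

theorem Real.prod_le_sum_div_card_pow {ι : Type*} [Fintype ι] [Nonempty ι] {z : ι → ℝ}
    (hz : ∀ i, 0 ≤ z i) : ∏ i, z i ≤ ((∑ i, z i) / Fintype.card ι) ^ Fintype.card ι := by
  set n := Fintype.card ι
  have hw : ∑ _i : ι, (n : ℝ)⁻¹ = 1 := by simp [n]
  have hamgm := geom_mean_le_arith_mean_weighted univ (fun _ => (n : ℝ)⁻¹) z
    (fun _ _ => by positivity) hw (fun i _ => hz i)
  rw [finsetProd_rpow _ _ (fun i _ => hz i), ← mul_sum, inv_mul_eq_div] at hamgm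
  have hprod : 0 ≤ ∏ i, z i := prod_nonneg fun i _ => hz i
  calc ∏ i, z i = ((∏ i, z i) ^ (n : ℝ)⁻¹) ^ n :=
        (rpow_inv_natCast_pow hprod Fintype.card_ne_zero).symm
    _ ≤ _ := by gcongr

theorem Real.prod_cos_le_cos_sum_div_card_pow {ι : Type*} [Fintype ι] {θ : ι → ℝ}
    (hθ : ∀ i, θ i ∈ Set.Icc (-(π / 2)) (π / 2)) :
    ∏ i, cos (θ i) ≤ cos ((∑ i, θ i) / Fintype.card ι) ^ Fintype.card ι := by
  cases isEmpty_or_nonempty ι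
  · simp
  set n := Fintype.card ι
  have hcos : ∀ i, 0 ≤ cos (θ i) := fun i => cos_nonneg_of_mem_Icc (hθ i)
  have hjensen : (∑ i, cos (θ i)) / n ≤ cos ((∑ i, θ i) / n) := by
    have := strictConcaveOn_cos_Icc.concaveOn.le_map_sum (t := univ) (w := fun _ => (n : ℝ)⁻¹)
      (p := θ) (fun _ _ => by positivity) (by simp [n]) (fun i _ => hθ i)
    rwa [← smul_sum, ← smul_sum, smul_eq_mul, smul_eq_mul, inv_mul_eq_div, inv_mul_eq_div] at this
  calc ∏ i, cos (θ i) ≤ ((∑ i, cos (θ i)) / n) ^ n := prod_le_sum_div_card_pow hcos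
    _ ≤ _ := by gcongr; exact div_nonneg (sum_nonneg fun i _ => hcos i) n.cast_nonneg

theorem neg_le_two_mul_cos_pi_div_card_pow {ι : Type*} [Fintype ι] {y : ι → ℂ}
    (hy : ∀ i, ‖y i - 1‖ ≤ 1) {x : ℝ} (hx : x < 0) (hprod : (x : ℂ) = ∏ i, y i) :
    -x ≤ (2 * cos (π / Fintype.card ι)) ^ Fintype.card ι := by
  set n := Fintype.card ι
  set S := ∑ i, Complex.arg (y i)
  have harg : ∀ i, |Complex.arg (y i)| ≤ π / 2 := fun i =>
    (Complex.abs_arg_lt_pi_div_two_of_norm_sub_one_le_one (hy i)).le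
  have hnorm : ∏ i, ‖y i‖ = -x := by
    rw [← abs_of_neg hx, ← Real.norm_eq_abs, ← Complex.norm_real, hprod, norm_prod]
  have hcosS : cos S = -1 := by
    have h := congrArg Complex.re hprod
    rw [Complex.prod_eq_prod_norm_mul_exp_sum_arg, hnorm, Complex.re_ofReal_mul,
      Complex.exp_ofReal_mul_I_re, Complex.ofReal_re] at h
    nlinarith
  have hS_le : |S| ≤ n * (π / 2) := by
    calc |S| ≤ ∑ i, |Complex.arg (y i)| := abs_sum_le_sum_abs _ _
      _ ≤ ∑ _i : ι, π / 2 := sum_le_sum fun i _ => harg i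
      _ = n * (π / 2) := by simp [n]
  have hmean_ge : π / n ≤ |S / n| := by
    rw [abs_div, Nat.abs_cast]
    exact div_le_div_of_nonneg_right (pi_le_abs_of_cos_eq_neg_one hcosS) n.cast_nonneg
  have hmean_le : |S / n| ≤ π / 2 := by
    rw [abs_div, Nat.abs_cast]
    exact div_le_of_le_mul₀ n.cast_nonneg (by positivity) (by linarith)
  calc -x = ∏ i, ‖y i‖ := hnorm.symm
    _ ≤ ∏ i, 2 * cos (Complex.arg (y i)) :=
        prod_le_prod (fun i _ => norm_nonneg _) fun i _ => Complex.norm_le_two_mul_cos_arg (hy i)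
    _ = 2 ^ n * ∏ i, cos (Complex.arg (y i)) := by simp [prod_mul_distrib, n]
    _ ≤ 2 ^ n * cos (S / n) ^ n := by
        gcongr
        exact prod_cos_le_cos_sum_div_card_pow fun i => abs_le.mp (harg i)
    _ = 2 ^ n * cos |S / n| ^ n := by rw [cos_abs]
    _ ≤ 2 ^ n * cos (π / n) ^ n := by
        gcongr
        · exact cos_nonneg_of_mem_Icc ⟨by linarith [abs_nonneg (S / n)], hmean_le⟩
        · exact cos_le_cos_of_nonneg_of_le_pi (by positivity) (by linarith [pi_pos]) hmean_ge
    _ = (2 * cos (π / n)) ^ n := (mul_pow _ _ _).symm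

theorem exists_prod_eq_ofReal_mul_exp {n : ℕ} (hn : n ≠ 0) {t θ : ℝ} (ht : 0 ≤ t)
    (hθ : 0 ≤ cos θ) (h : t ≤ (2 * cos θ) ^ n) :
    ∃ y : Fin n → ℂ, (∀ i, ‖y i - 1‖ ≤ 1) ∧
      ∏ i, y i = (t : ℂ) * Complex.exp ((n * θ : ℝ) * Complex.I) := by
  set r := t ^ (n : ℝ)⁻¹
  have hr : 0 ≤ r := rpow_nonneg ht _
  have hrn : r ^ n = t := rpow_inv_natCast_pow ht hn
  have hr_le : r ≤ 2 * cos θ := by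
    rwa [← pow_le_pow_iff_left₀ hr (by positivity) hn, hrn]
  refine ⟨fun _ => (r : ℂ) * Complex.exp (θ * Complex.I),
    fun _ => Complex.norm_ofReal_mul_exp_sub_one_le_one hr hr_le, ?_⟩
  rw [prod_const, card_univ, Fintype.card_fin, mul_pow, ← Complex.exp_nat_mul, ← hrn]
  push_cast
  ring_nf

theorem exists_prod_eq_ofReal_iff_mem_Icc {n : ℕ} (hn : 2 ≤ n) (x : ℝ) :
    (∃ y : Fin n → ℂ, (∀ i, ‖y i - 1‖ ≤ 1) ∧ (x : ℂ) = ∏ i, y i) ↔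
      x ∈ Set.Icc (-(2 ^ n * cos (π / n) ^ n)) (2 ^ n) := by
  have hcos : 0 ≤ cos (π / n) := by
    refine cos_nonneg_of_mem_Icc ⟨by linarith [pi_pos, div_nonneg pi_pos.le n.cast_nonneg], ?_⟩
    exact div_le_div_of_nonneg_left pi_pos.le two_pos (by exact_mod_cast hn)
  constructor
  · rintro ⟨y, hy, hprod⟩
    have hnorm : ∀ i, ‖y i‖ ≤ 2 := fun i =>
      (Complex.norm_le_two_mul_cos_arg (hy i)).trans (by linarith [cos_le_one (Complex.arg (y i))])
    refine ⟨?_, ?_⟩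
    · rcases le_or_gt 0 x with hx | hx
      · linarith [show 0 ≤ 2 ^ n * cos (π / n) ^ n by positivity]
      · have := neg_le_two_mul_cos_pi_div_card_pow hy hx hprod
        rw [Fintype.card_fin, mul_pow] at this
        linarith
    · calc x ≤ ‖(x : ℂ)‖ := by rw [Complex.norm_real]; exact le_abs_self x
        _ = ∏ i, ‖y i‖ := by rw [hprod, norm_prod]
        _ ≤ ∏ _i : Fin n, 2 := prod_le_prod (fun i _ => norm_nonneg _) fun i _ => hnorm i
        _ = 2 ^ n := by simp
  · rintro ⟨hlow, hupp⟩
    rcases le_or_gt 0 x with hx | hx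
    · obtain ⟨y, hy, hprod⟩ := exists_prod_eq_ofReal_mul_exp (n := n) (θ := 0) (by omega) hx
        (by simp) (by simpa using hupp)
      exact ⟨y, hy, by simpa using hprod.symm⟩
    · obtain ⟨y, hy, hprod⟩ := exists_prod_eq_ofReal_mul_exp (n := n) (θ := π / n) (by omega)
        (neg_nonneg.mpr hx.le) hcos (by rw [mul_pow]; linarith)
      refine ⟨y, hy, ?_⟩
      rw [hprod, mul_div_cancel₀ _ (by positivity), Complex.exp_pi_mul_I]
      push_cast
      ring

/-- Let `k ≥ 3` and let `D = {y ∈ ℂ : |y − 1| ≤ 1}` be the closed disk of radius `1`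
centered at `1`.  The set of real numbers expressible as a product of `k − 1` elements
of `D` is exactly the closed interval
`[−2^{k−1} cos^{k−1}(π/(k−1)), 2^{k−1}]`. -/
theorem stmt12 (k : ℕ) (hk : 3 ≤ k) (x : ℝ) :
    (∃ y : Fin (k - 1) → ℂ,
        (∀ i, ‖y i - 1‖ ≤ 1) ∧ (x : ℂ) = ∏ i, y i) ↔
    x ∈ Set.Icc
      (-(2 ^ (k - 1) * Real.cos (Real.pi / (k - 1)) ^ (k - 1)))
      ((2 : ℝ) ^ (k - 1)) := by
  obtain ⟨n, rfl⟩ : ∃ n, k = n + 1 := ⟨k - 1, by omega⟩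
  rw [Nat.cast_succ, add_sub_cancel_right, Nat.add_sub_cancel]
  exact exists_prod_eq_ofReal_iff_mem_Icc (by omega) x
end

section
/- Let k ≥ 3 be an integer and let β be a real number with 1/(2^{k−1} cos^{k−1}(π/(k−1)) + 1) < β < 1. Then the degree-k polynomial P_k(z) = β(1 + z)^k + (1 − β)(1 + z^k) has at most k − 3 zeros (counted with multiplicity) on the unit circle {z ∈ ℂ : |z| = 1}; in particular, P_k has at least one zero z with |z| ≠ 1. -/
open scoped Classical ComplexConjugate
open Polynomial

/-!
`P = P_k` has real coefficients and is self-reciprocal (`z ^ k P(1/z) = P(z)`), so its roots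
off the unit circle are stable under `z ↦ conj z` and `z ↦ z⁻¹`. Its only possible real root is
`-1`, hence a root `z` off the circle gives three distinct roots `z`, `z⁻¹`, `conj z` off the
circle. Such a root exists: the lower bound on `β` is exactly what makes `P'` have the explicit
zero `ζ = 1 / (ρ e^{iπ/(k-1)} - 1)`, `ρ ^ (k-1) = (1 - β) / β`, outside the closed unit disc, and
by Gauss–Lucas the roots of `P` cannot all lie in that disc.
-/

lemma Multiset.three_le_card_of_mem {α : Type*} {s : Multiset α} {a b c : α}
    (ha : a ∈ s) (hb : b ∈ s) (hc : c ∈ s) (hab : a ≠ b) (hac : a ≠ c) (hbc : b ≠ c) :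
    3 ≤ Multiset.card s :=
  calc 3 = ({a, b, c} : Finset α).card :=
        (Finset.card_eq_three.mpr ⟨a, b, c, hab, hac, hbc, rfl⟩).symm
    _ ≤ s.toFinset.card := Finset.card_le_card (by simp [Finset.insert_subset_iff, ha, hb, hc])
    _ ≤ Multiset.card s := Multiset.toFinset_card_le s

lemma norm_inv_ne_norm {𝕜 : Type*} [NormedDivisionRing 𝕜] {z : 𝕜} (h0 : z ≠ 0)
    (h1 : ‖z‖ ≠ 1) : ‖z⁻¹‖ ≠ ‖z‖ := by
  rw [norm_inv, Ne, inv_eq_self₀, not_or, not_or]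
  exact ⟨by linarith [norm_nonneg z], norm_ne_zero_iff.mpr h0, h1⟩

lemma one_add_pow_mul_one_add_pow_pos {x : ℝ} (hx : x ≠ -1) (k : ℕ) :
    0 < (1 + x) ^ k * (1 + x ^ k) := by
  rcases k.even_or_odd with hk | hk
  · exact mul_pos (hk.pow_pos (by contrapose! hx; linarith)) (by linarith [hk.pow_nonneg x])
  · have hmono := hk.strictMono_pow (R := ℝ)
    rcases lt_or_gt_of_ne hx with hx | hx
    · have : x ^ k < (-1) ^ k := hmono hx
      rw [hk.neg_one_pow] at this
      exact mul_pos_of_neg_of_neg (hk.pow_neg (by linarith)) (by linarith)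
    · have : (-1) ^ k < x ^ k := hmono hx
      rw [hk.neg_one_pow] at this
      exact mul_pos (pow_pos (by linarith) k) (by linarith)

lemma Real.cos_pi_div_natCast_nonneg {m : ℕ} (hm : 2 ≤ m) : 0 ≤ Real.cos (Real.pi / m) :=
  Real.cos_nonneg_of_neg_pi_div_two_le_of_le
    (by linarith [Real.pi_pos, div_nonneg Real.pi_pos.le (Nat.cast_nonneg (α := ℝ) m)])
    (div_le_div_of_nonneg_left Real.pi_pos.le two_pos (by exact_mod_cast hm))

lemma Complex.exp_pi_div_natCast_mul_I_pow {m : ℕ} (hm : m ≠ 0) :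
    Complex.exp (↑(Real.pi / m) * Complex.I) ^ m = -1 := by
  rw [← Complex.exp_nat_mul, ← Complex.exp_pi_mul_I]
  congr 1
  push_cast
  field_simp

lemma Complex.normSq_ofReal_mul_exp_mul_I_sub_one (ρ θ : ℝ) :
    Complex.normSq (ρ * Complex.exp (θ * Complex.I) - 1) = ρ ^ 2 - 2 * ρ * Real.cos θ + 1 := by
  rw [Complex.normSq_apply]
  simp only [Complex.sub_re, Complex.sub_im, Complex.re_ofReal_mul, Complex.im_ofReal_mul,
    Complex.exp_ofReal_mul_I_re, Complex.exp_ofReal_mul_I_im, Complex.one_re, Complex.one_im]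
  linear_combination ρ ^ 2 * Real.sin_sq_add_cos_sq θ

lemma exists_one_lt_norm_mul_one_add_pow_add_mul_pow_eq_zero {m : ℕ} (hm : 2 ≤ m) {β : ℝ}
    (hβ0 : 0 < β) (hβ1 : β < 1) (hβ : (1 - β) / β < (2 * Real.cos (Real.pi / m)) ^ m) :
    ∃ ζ : ℂ, 1 < ‖ζ‖ ∧ β * (1 + ζ) ^ m + (1 - β) * ζ ^ m = 0 := by
  set θ := Real.pi / m
  have hθ0 : 0 < θ := by positivity
  have hθπ : θ < Real.pi := div_lt_self Real.pi_pos (by exact_mod_cast hm)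
  have hx : 0 < (1 - β) / β := div_pos (by linarith) hβ0
  set ρ := ((1 - β) / β) ^ ((m : ℝ)⁻¹)
  have hρ0 : 0 < ρ := Real.rpow_pos_of_pos hx _
  have hρm : ρ ^ m = (1 - β) / β := Real.rpow_inv_natCast_pow hx.le (by omega)
  have hρ : ρ < 2 * Real.cos θ :=
    lt_of_pow_lt_pow_left₀ m (by linarith [Real.cos_pi_div_natCast_nonneg hm]) (hρm ▸ hβ)
  set ω := Complex.exp (θ * Complex.I)
  -- `ζ := u⁻¹` satisfies `1 + ζ = ρ ω ζ`, and `(ρ ω) ^ m = -(1 - β) / β`.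
  set u := (ρ : ℂ) * ω - 1
  have hu0 : u ≠ 0 := by
    intro h
    have him := congrArg Complex.im h
    simp only [u, ω, Complex.sub_im, Complex.im_ofReal_mul, Complex.exp_ofReal_mul_I_im,
      Complex.one_im, Complex.zero_im, sub_zero] at him
    exact (mul_pos hρ0 (Real.sin_pos_of_pos_of_lt_pi hθ0 hθπ)).ne' him
  have hu1 : ‖u‖ < 1 := by
    have h : ‖u‖ ^ 2 < 1 := by
      rw [Complex.sq_norm, Complex.normSq_ofReal_mul_exp_mul_I_sub_one]
      nlinarith
    nlinarith [norm_nonneg u]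
  refine ⟨u⁻¹, ?_, ?_⟩
  · rw [norm_inv]
    exact (one_lt_inv₀ (norm_pos_iff.mpr hu0)).mpr hu1
  · have hζ : 1 + u⁻¹ = ρ * ω * u⁻¹ := by
      field_simp
      ring
    have hβC : (β : ℂ) ≠ 0 := by exact_mod_cast hβ0.ne'
    rw [hζ, mul_pow, mul_pow, Complex.exp_pi_div_natCast_mul_I_pow (by omega),
      ← Complex.ofReal_pow, hρm]
    push_cast
    field_simp
    ring

lemma exists_mem_roots_one_lt_norm {P : ℂ[X]} (hP : 0 < P.degree) {ζ : ℂ} (hζ : 1 < ‖ζ‖)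
    (hζP : (derivative P).eval ζ = 0) : ∃ z ∈ P.roots, 1 < ‖z‖ := by
  by_contra! h
  have hroots : P.rootSet ℂ ⊆ Metric.closedBall 0 1 := fun z hz ↦ by
    rw [mem_rootSet, coe_aeval_eq_eval] at hz
    simpa using h z (mem_roots'.mpr hz)
  have hζroot : ζ ∈ (derivative P).rootSet ℂ := by
    rw [mem_rootSet, coe_aeval_eq_eval]
    exact ⟨derivative_ne_zero.mpr (natDegree_pos_iff_degree_pos.mpr hP).ne', hζP⟩
  have := (convex_closedBall (0 : ℂ) 1).convexHull_subset_iff.mpr hroots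
    (rootSet_derivative_subset_convexHull_rootSet hP hζroot)
  rw [mem_closedBall_zero_iff] at this
  linarith

noncomputable def isingPoly (k : ℕ) (β : ℝ) : ℂ[X] :=
  C (β : ℂ) * (1 + X) ^ k + C (1 - (β : ℂ)) * (1 + X ^ k)

namespace isingPoly

variable {k : ℕ} {β : ℝ}

@[simp] lemma eval_eq (z : ℂ) :
    (isingPoly k β).eval z = β * (1 + z) ^ k + (1 - β) * (1 + z ^ k) := by
  simp [isingPoly]

lemma eval_derivative (z : ℂ) : (derivative (isingPoly k β)).eval z =
    k * (β * (1 + z) ^ (k - 1) + (1 - β) * z ^ (k - 1)) := by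
  simp [isingPoly, derivative_pow]
  ring

lemma natDegree_le : (isingPoly k β).natDegree ≤ k := by
  unfold isingPoly
  compute_degree

lemma coeff_self (hk : k ≠ 0) : (isingPoly k β).coeff k = 1 := by
  rw [isingPoly, coeff_add, coeff_C_mul, coeff_C_mul, add_comm 1 X, coeff_X_add_one_pow,
    coeff_add, coeff_one, coeff_X_pow]
  simp [hk]

lemma natDegree_eq (hk : k ≠ 0) : (isingPoly k β).natDegree = k :=
  natDegree_eq_of_le_of_coeff_ne_zero natDegree_le (by simp [coeff_self hk])

lemma degree_pos (hk : k ≠ 0) : 0 < (isingPoly k β).degree :=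
  natDegree_pos_iff_degree_pos.mp (by rw [natDegree_eq hk]; omega)

lemma card_roots (hk : k ≠ 0) : Multiset.card (isingPoly k β).roots = k := by
  rw [← (IsAlgClosed.splits _).natDegree_eq_card_roots, natDegree_eq hk]

lemma eval_ofReal_ne_zero (hβ0 : 0 ≤ β) (hβ1 : β ≤ 1) {x : ℝ} (hx : x ≠ -1) :
    (isingPoly k β).eval (x : ℂ) ≠ 0 := by
  have hpos := one_add_pow_mul_one_add_pow_pos hx k
  have hsq : 0 < (1 + x ^ k) ^ 2 := by
    have : 1 + x ^ k ≠ 0 := fun h ↦ by simp [h] at hpos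
    positivity
  have hreal : β * (1 + x) ^ k + (1 - β) * (1 + x ^ k) ≠ 0 := by
    intro h
    have : (β * (1 + x) ^ k + (1 - β) * (1 + x ^ k)) * (1 + x ^ k) = 0 := by rw [h, zero_mul]
    nlinarith [mul_nonneg hβ0 hpos.le, mul_nonneg (sub_nonneg.2 hβ1) hsq.le]
  rw [eval_eq]
  exact_mod_cast hreal

lemma pow_mul_eval_inv {z : ℂ} (hz : z ≠ 0) :
    z ^ k * (isingPoly k β).eval z⁻¹ = (isingPoly k β).eval z := by
  have h : z ^ k * (1 + z⁻¹) ^ k = (1 + z) ^ k := by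
    rw [← mul_pow]
    congr 1
    field_simp
    ring
  simp only [eval_eq]
  linear_combination (β : ℂ) * h + (1 - (β : ℂ)) * mul_inv_cancel₀ (pow_ne_zero k hz)

variable {z : ℂ}

lemma conj_mem_roots (hz : z ∈ (isingPoly k β).roots) : conj z ∈ (isingPoly k β).roots := by
  rw [mem_roots', IsRoot.def] at hz ⊢
  refine ⟨hz.1, ?_⟩
  simpa using congrArg conj hz.2

lemma ne_zero_of_mem_roots (hk : k ≠ 0) (hz : z ∈ (isingPoly k β).roots) : z ≠ 0 := by
  rintro rfl
  simpa [hk] using (mem_roots'.mp hz).2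

lemma inv_mem_roots (hk : k ≠ 0) (hz : z ∈ (isingPoly k β).roots) :
    z⁻¹ ∈ (isingPoly k β).roots := by
  have hz0 := ne_zero_of_mem_roots hk hz
  rw [mem_roots', IsRoot.def] at hz ⊢
  refine ⟨hz.1, ?_⟩
  rw [← pow_mul_eval_inv hz0] at hz
  exact (mul_eq_zero.mp hz.2).resolve_left (pow_ne_zero k hz0)

lemma conj_ne_self_of_mem_roots (hβ0 : 0 ≤ β) (hβ1 : β ≤ 1) (hz : z ∈ (isingPoly k β).roots)
    (h1 : ‖z‖ ≠ 1) : conj z ≠ z := by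
  intro h
  obtain ⟨x, rfl⟩ := Complex.conj_eq_iff_real.mp h
  have hx : x ≠ -1 := by
    rintro rfl
    simp at h1
  exact eval_ofReal_ne_zero hβ0 hβ1 hx (mem_roots'.mp hz).2

lemma three_le_card_roots_filter_norm_ne_one (hk : k ≠ 0) (hβ0 : 0 ≤ β) (hβ1 : β ≤ 1)
    (hz : z ∈ (isingPoly k β).roots) (h1 : ‖z‖ ≠ 1) :
    3 ≤ Multiset.card ((isingPoly k β).roots.filter fun w ↦ ¬‖w‖ = 1) := by
  have hz0 := ne_zero_of_mem_roots hk hz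
  have hnorm := norm_inv_ne_norm hz0 h1
  refine Multiset.three_le_card_of_mem (a := z) (b := z⁻¹) (c := conj z)
    (Multiset.mem_filter.mpr ⟨hz, h1⟩)
    (Multiset.mem_filter.mpr ⟨inv_mem_roots hk hz, by rwa [norm_inv, inv_eq_one]⟩)
    (Multiset.mem_filter.mpr ⟨conj_mem_roots hz, by rwa [Complex.norm_conj]⟩)
    (fun h ↦ hnorm (by rw [← h])) (conj_ne_self_of_mem_roots hβ0 hβ1 hz h1).symm
    (fun h ↦ hnorm (by rw [h, Complex.norm_conj]))

end isingPoly

/-- Let `k ≥ 3` and `1/(2^{k−1} cos^{k−1}(π/(k−1)) + 1) < β < 1`.  Then the degree-`k`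
polynomial `P_k(z) = β(1+z)^k + (1−β)(1+z^k)` has at most `k − 3` zeros (counted with
multiplicity) on the unit circle; in particular it has at least one zero `z` with
`|z| ≠ 1`. -/
theorem stmt14 (k : ℕ) (hk : 3 ≤ k) (β : ℝ)
    (hβl : 1 / (2 ^ (k - 1) * Real.cos (Real.pi / (k - 1)) ^ (k - 1) + 1) < β)
    (hβu : β < 1) :
    (((Polynomial.C (β : ℂ) * (1 + Polynomial.X) ^ k +
          Polynomial.C (1 - (β : ℂ)) * (1 + Polynomial.X ^ k)).roots.filter
        (fun z => ‖z‖ = 1)).card ≤ k - 3) ∧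
    (∃ z ∈ (Polynomial.C (β : ℂ) * (1 + Polynomial.X) ^ k +
        Polynomial.C (1 - (β : ℂ)) * (1 + Polynomial.X ^ k)).roots,
      ‖z‖ ≠ 1) := by
  show (((isingPoly k β).roots.filter fun z ↦ ‖z‖ = 1).card ≤ k - 3) ∧
    ∃ z ∈ (isingPoly k β).roots, ‖z‖ ≠ 1
  have hk0 : k ≠ 0 := by omega
  rw [← Nat.cast_pred (by omega)] at hβl
  set c := Real.cos (Real.pi / (k - 1 : ℕ))
  have hc : 0 ≤ c := Real.cos_pi_div_natCast_nonneg (by omega)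
  have hβ0 : 0 < β := lt_trans (by positivity) hβl
  have hβ : (1 - β) / β < (2 * c) ^ (k - 1) := by
    rw [div_lt_iff₀ (by positivity)] at hβl
    rw [div_lt_iff₀ hβ0, mul_pow]
    linarith
  obtain ⟨ζ, hζ1, hζ⟩ :=
    exists_one_lt_norm_mul_one_add_pow_add_mul_pow_eq_zero (by omega) hβ0 hβu hβ
  obtain ⟨z, hz, hz1⟩ := exists_mem_roots_one_lt_norm (isingPoly.degree_pos hk0) hζ1
    (by rw [isingPoly.eval_derivative, hζ, mul_zero])
  have hoff := isingPoly.three_le_card_roots_filter_norm_ne_one hk0 hβ0.le hβu.le hz hz1.ne'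
  have hsplit := congrArg Multiset.card
    (Multiset.filter_add_not (fun z ↦ ‖z‖ = 1) (isingPoly k β).roots)
  rw [Multiset.card_add, isingPoly.card_roots hk0] at hsplit
  exact ⟨by omega, z, hz, hz1.ne'⟩
end
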